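/- arXiv:1604.02097 — 2 statements merged into one kernel-verified Lean document; each statement's English description precedes it below -/
import Mathlib

section
/- Let r > 1, β ≥ 0, and let x₀ = (x₀₁, x₀₂) have positive integer entries. Then the intensity of a (β, r, x₀)-urn process satisfies, for all n ≥ 1, P[N(β, r, x₀) ≥ n] ≤ r^{−(x₀₁−x₀₂)⁺} · (2/(r+1))^{n−1}, where (x)⁺ = max{x, 0}. Moreover, lim_{n→∞} (1/n) · log P[N(β, r, x₀) ≥ n] = log(2/(r+1)). -/
open MeasureTheory Filter

noncomputable section

/-- Transition probability of the nonlinear Pólya urn with feedback strength `β` and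
fitness ratio `r`: from `(x₁,x₂)` move to `(x₁+1,x₂)` with probability
`r·x₁^β/(r·x₁^β + x₂^β)`, to `(x₁,x₂+1)` with probability `x₂^β/(r·x₁^β + x₂^β)`,
and nowhere else. -/
def urnStep (β r : ℝ) (x y : ℕ × ℕ) : ℝ :=
  if y = (x.1 + 1, x.2) then r * (x.1 : ℝ) ^ β / (r * (x.1 : ℝ) ^ β + (x.2 : ℝ) ^ β)
  else if y = (x.1, x.2 + 1) then (x.2 : ℝ) ^ β / (r * (x.1 : ℝ) ^ β + (x.2 : ℝ) ^ β)
  else 0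

/-- `μ` is the law (on trajectories `ℕ → ℕ × ℕ`) of a `(β,r,x₀)`-urn process:
a probability measure under which each finite initial trajectory starting at `x₀`
has probability equal to the product of the one-step urn transition probabilities. -/
def IsUrnProcess (μ : Measure (ℕ → ℕ × ℕ)) (β r : ℝ) (x₀ : ℕ × ℕ) : Prop :=
  IsProbabilityMeasure μ ∧
  ∀ (n : ℕ) (path : ℕ → ℕ × ℕ), path 0 = x₀ →
    (μ {ω | ∀ t ≤ n, ω t = path t}).toReal
      = ∏ t ∈ Finset.range n, urnStep β r (path t) (path (t + 1))

/-- `N_t`: the number of ties up to (and including) time `t`. -/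
def numTiesUpTo (ω : ℕ → ℕ × ℕ) (t : ℕ) : ℕ :=
  ((Finset.range (t + 1)).filter (fun j => (ω j).1 = (ω j).2)).card

/-- The intensity `N`: the total number of ties (possibly `∞`). -/
def intensity (ω : ℕ → ℕ × ℕ) : ℕ∞ :=
  {t : ℕ | (ω t).1 = (ω t).2}.encard

/-- `T_n` (for `n ≥ 1`): the time of the `n`-th tie, i.e. the (unique, if it exists) time `s`
at which a tie occurs and the number of ties up to `s` equals `n`; `⊤` if there is no such time. -/
def nthTieTime (n : ℕ) (ω : ℕ → ℕ × ℕ) : ℕ∞ :=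
  sInf {t : ℕ∞ | ∃ s : ℕ, t = (s : ℕ∞) ∧ (ω s).1 = (ω s).2 ∧ numTiesUpTo ω s = n}

/-- The event `{T ≥ t}` where `T` is the duration (time of the last tie, with the convention
`T = -1` if there is no tie): for `t : ℕ` this event is exactly `{∃ s ≥ t, a tie occurs at s}`. -/
def durationTail (t : ℕ) : Set (ℕ → ℕ × ℕ) :=
  {ω | ∃ s, t ≤ s ∧ (ω s).1 = (ω s).2}

/-!
Upper bound: with `q = 2 / (r + 1)`, the weight `q ^ (m - 1) * r ^ (-(x₁ - x₂)⁺)` is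
superharmonic for the urn together with the number `m` of ties still required. Below the
diagonal the weight is constant; from a tie the urn moves to weights `r⁻¹` and `1` with
probabilities `r / (r + 1)` and `1 / (r + 1)`, which average to `q`; above the diagonal
`r ^ (-(x₁ - x₂))` is a supermartingale because `r ≥ 1` and `β ≥ 0`.

Lower bound: far out along the diagonal the urn stays, for a bounded number of steps, close to a
biased coin walk, so from a high tie a new tie follows within bounded time with probability close
to `r / (r + 1) * r⁻¹ + 1 / (r + 1) * 1 = q`. Reaching a high tie along a fixed path and then
chaining such returns gives `P[N ≥ n] ≥ c ρ ^ (n - 1)` for every `ρ < q`.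
-/

open Topology

namespace Urn

def succFst (x : ℕ × ℕ) : ℕ × ℕ := (x.1 + 1, x.2)

def succSnd (x : ℕ × ℕ) : ℕ × ℕ := (x.1, x.2 + 1)

def step : Bool → ℕ × ℕ → ℕ × ℕ
  | true => succFst
  | false => succSnd

def probFst (β r : ℝ) (x : ℕ × ℕ) : ℝ := urnStep β r x (succFst x)

def probSnd (β r : ℝ) (x : ℕ × ℕ) : ℝ := urnStep β r x (succSnd x)

def stepProb (β r : ℝ) : Bool → ℕ × ℕ → ℝ
  | true => probFst β r
  | false => probSnd β r

def tieInd (x : ℕ × ℕ) : ℕ := if x.1 = x.2 then 1 else 0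

def IsPos (x : ℕ × ℕ) : Prop := 0 < x.1 ∧ 0 < x.2

lemma IsPos.succFst {x : ℕ × ℕ} (h : IsPos x) : IsPos (succFst x) := ⟨x.1.succ_pos, h.2⟩

lemma IsPos.succSnd {x : ℕ × ℕ} (h : IsPos x) : IsPos (succSnd x) := ⟨h.1, x.2.succ_pos⟩

lemma IsPos.step {x : ℕ × ℕ} (h : IsPos x) : ∀ c, IsPos (step c x)
  | true => h.succFst
  | false => h.succSnd

lemma urnStep_step (β r : ℝ) (x : ℕ × ℕ) :
    ∀ c, urnStep β r x (step c x) = stepProb β r c x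
  | true => rfl
  | false => rfl

lemma probFst_eq (β r : ℝ) (x : ℕ × ℕ) :
    probFst β r x = r * (x.1 : ℝ) ^ β / (r * (x.1 : ℝ) ^ β + (x.2 : ℝ) ^ β) := by
  simp [probFst, urnStep, succFst]

lemma probSnd_eq (β r : ℝ) (x : ℕ × ℕ) :
    probSnd β r x = (x.2 : ℝ) ^ β / (r * (x.1 : ℝ) ^ β + (x.2 : ℝ) ^ β) := by
  simp [probSnd, urnStep, succSnd]

section Probabilities

variable {β r : ℝ} {x : ℕ × ℕ}

lemma rpow_fst_pos (hx : IsPos x) : 0 < (x.1 : ℝ) ^ β := by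
  have := hx.1; positivity

lemma rpow_snd_pos (hx : IsPos x) : 0 < (x.2 : ℝ) ^ β := by
  have := hx.2; positivity

lemma probFst_pos (hr : 0 < r) (hx : IsPos x) : 0 < probFst β r x := by
  have := rpow_fst_pos (β := β) hx; have := rpow_snd_pos (β := β) hx
  rw [probFst_eq]; positivity

lemma probSnd_pos (hr : 0 < r) (hx : IsPos x) : 0 < probSnd β r x := by
  have := rpow_fst_pos (β := β) hx; have := rpow_snd_pos (β := β) hx
  rw [probSnd_eq]; positivity

lemma probFst_add_probSnd (hr : 0 < r) (hx : IsPos x) : probFst β r x + probSnd β r x = 1 := by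
  have := rpow_fst_pos (β := β) hx; have := rpow_snd_pos (β := β) hx
  rw [probFst_eq, probSnd_eq, ← add_div, div_self (by positivity)]

lemma stepProb_pos (hr : 0 < r) (hx : IsPos x) : ∀ c, 0 < stepProb β r c x
  | true => probFst_pos hr hx
  | false => probSnd_pos hr hx

lemma stepProb_le_one (hr : 0 < r) (hx : IsPos x) (c : Bool) : stepProb β r c x ≤ 1 := by
  have := probFst_add_probSnd (β := β) hr hx
  have := probFst_pos (β := β) hr hx; have := probSnd_pos (β := β) hr hx
  cases c <;> simp only [stepProb] <;> linarith

lemma probFst_of_tie (hr : 0 < r) {z : ℕ} (hz : 0 < z) : probFst β r (z, z) = r / (r + 1) := by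
  have : (0 : ℝ) < (z : ℝ) ^ β := by positivity
  rw [probFst_eq]; field_simp

lemma probSnd_of_tie (hr : 0 < r) {z : ℕ} (hz : 0 < z) : probSnd β r (z, z) = 1 / (r + 1) := by
  have : (0 : ℝ) < (z : ℝ) ^ β := by positivity
  rw [probSnd_eq]; field_simp

/-- Above the diagonal, `r ^ (x.2 - x.1)` is superharmonic. -/
lemma probFst_mul_inv_add_probSnd_mul_le (hβ : 0 ≤ β) (hr : 1 ≤ r) (hx : IsPos x)
    (hgap : x.2 ≤ x.1) : probFst β r x * r⁻¹ + probSnd β r x * r ≤ 1 := by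
  have h1 := rpow_fst_pos (β := β) hx
  have h2 := rpow_snd_pos (β := β) hx
  have hle : (x.2 : ℝ) ^ β ≤ (x.1 : ℝ) ^ β := by gcongr
  have hr0 : 0 < r := by linarith
  rw [probFst_eq, probSnd_eq, div_mul_eq_mul_div, div_mul_eq_mul_div, ← add_div,
    div_le_one (by positivity), mul_right_comm, mul_inv_cancel₀ hr0.ne', one_mul]
  nlinarith

end Probabilities

/-- `tieTail β r s x m` is the probability that the urn started at `x` has at least `m` ties at
times `1, …, s`. -/
def tieTail (β r : ℝ) : ℕ → ℕ × ℕ → ℕ → ℝ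
  | _, _, 0 => 1
  | 0, _, _ + 1 => 0
  | s + 1, x, m + 1 =>
      probFst β r x * tieTail β r s (succFst x) (m + 1 - tieInd (succFst x))
        + probSnd β r x * tieTail β r s (succSnd x) (m + 1 - tieInd (succSnd x))

@[simp]
lemma tieTail_zero_right (β r : ℝ) (s : ℕ) (x : ℕ × ℕ) : tieTail β r s x 0 = 1 := by
  cases s <;> rfl

lemma tieTail_succ (β r : ℝ) (s : ℕ) (x : ℕ × ℕ) (m : ℕ) :
    tieTail β r (s + 1) x (m + 1)
      = probFst β r x * tieTail β r s (succFst x) (m + 1 - tieInd (succFst x))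
        + probSnd β r x * tieTail β r s (succSnd x) (m + 1 - tieInd (succSnd x)) := rfl

section TieTail

variable {β r : ℝ} (hr : 0 < r)
include hr

lemma tieTail_nonneg (s : ℕ) {x : ℕ × ℕ} (hx : IsPos x) (m : ℕ) :
    0 ≤ tieTail β r s x m := by
  induction s generalizing x m with
  | zero => cases m <;> simp [tieTail]
  | succ s ih =>
    cases m with
    | zero => simp
    | succ m =>
      have := probFst_pos (β := β) hr hx; have := probSnd_pos (β := β) hr hx
      have := ih hx.succFst (m + 1 - tieInd (succFst x))
      have := ih hx.succSnd (m + 1 - tieInd (succSnd x))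
      rw [tieTail_succ]; positivity

lemma tieTail_le_one (s : ℕ) {x : ℕ × ℕ} (hx : IsPos x) (m : ℕ) :
    tieTail β r s x m ≤ 1 := by
  induction s generalizing x m with
  | zero => cases m <;> simp [tieTail]
  | succ s ih =>
    cases m with
    | zero => simp
    | succ m =>
      have := probFst_pos (β := β) hr hx; have := probSnd_pos (β := β) hr hx
      have := probFst_add_probSnd (β := β) hr hx
      have := ih hx.succFst (m + 1 - tieInd (succFst x))
      have := ih hx.succSnd (m + 1 - tieInd (succSnd x))
      rw [tieTail_succ]; nlinarith

lemma tieTail_le_tieTail_succ (s : ℕ) {x : ℕ × ℕ} (hx : IsPos x) (m : ℕ) :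
    tieTail β r s x m ≤ tieTail β r (s + 1) x m := by
  induction s generalizing x m with
  | zero =>
    cases m
    · simp
    · exact tieTail_nonneg hr 1 hx _
  | succ s ih =>
    cases m with
    | zero => simp
    | succ m =>
      have := probFst_pos (β := β) hr hx; have := probSnd_pos (β := β) hr hx
      rw [tieTail_succ, tieTail_succ]
      gcongr
      exacts [ih hx.succFst _, ih hx.succSnd _]

lemma tieTail_mono {x : ℕ × ℕ} (hx : IsPos x) (m : ℕ) :
    Monotone fun s => tieTail β r s x m :=
  monotone_nat_of_le_succ fun s => tieTail_le_tieTail_succ hr s hx m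

lemma tieTail_anti (s : ℕ) {x : ℕ × ℕ} (hx : IsPos x) :
    Antitone fun m => tieTail β r s x m := by
  intro m m' hm
  induction s generalizing x m m' with
  | zero => cases m' <;> cases m <;> simp_all [tieTail]
  | succ s ih =>
    cases m with
    | zero => simpa using tieTail_le_one hr _ hx m'
    | succ m =>
      obtain ⟨m', rfl⟩ : ∃ k, m' = k + 1 := ⟨m' - 1, by omega⟩
      have := probFst_pos (β := β) hr hx; have := probSnd_pos (β := β) hr hx
      simp only [tieTail_succ]
      gcongr
      exacts [ih hx.succFst (by omega), ih hx.succSnd (by omega)]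

end TieTail

def gapWeight (r : ℝ) (x : ℕ × ℕ) : ℝ := r ^ (-(max ((x.1 : ℝ) - (x.2 : ℝ)) 0))

def tieFactor (r : ℝ) : ℝ := 2 / (r + 1)

/-- Every tie costs a factor `tieFactor r`, and reaching the diagonal from above costs
`gapWeight r x` on top. -/
def potential (r : ℝ) (x : ℕ × ℕ) : ℕ → ℝ
  | 0 => 1
  | m + 1 => tieFactor r ^ m * if x.1 = x.2 then tieFactor r else gapWeight r x

section Potential

variable {r : ℝ} {x : ℕ × ℕ}

lemma gapWeight_of_le (h : x.1 ≤ x.2) : gapWeight r x = 1 := by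
  rw [gapWeight, max_eq_right (by simpa using h), neg_zero, Real.rpow_zero]

lemma gapWeight_of_ge (h : x.2 ≤ x.1) : gapWeight r x = r ^ (-((x.1 : ℝ) - x.2)) := by
  rw [gapWeight, max_eq_left (by simpa using h)]

variable (hr : 0 < r)
include hr

lemma gapWeight_pos (x : ℕ × ℕ) : 0 < gapWeight r x := Real.rpow_pos_of_pos hr _

lemma tieFactor_pos : 0 < tieFactor r := by unfold tieFactor; positivity

lemma gapWeight_succFst_of_le (h : x.2 ≤ x.1) :
    gapWeight r (succFst x) = gapWeight r x * r⁻¹ := by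
  rw [gapWeight_of_ge h, gapWeight_of_ge (by simp [succFst]; omega), ← Real.rpow_neg_one,
    ← Real.rpow_add hr]
  simp only [succFst]; push_cast; ring_nf

lemma gapWeight_succSnd_of_lt (h : x.2 < x.1) :
    gapWeight r (succSnd x) = gapWeight r x * r := by
  rw [gapWeight_of_ge h.le, gapWeight_of_ge (by simp [succSnd]; omega),
    ← Real.rpow_add_one hr.ne']
  simp only [succSnd]; push_cast; ring_nf

lemma potential_nonneg (x : ℕ × ℕ) (m : ℕ) : 0 ≤ potential r x m := by
  have := tieFactor_pos hr; have := gapWeight_pos hr x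
  cases m with
  | zero => simp [potential]
  | succ m => unfold potential; split_ifs <;> positivity

omit hr in
lemma potential_sub_tieInd (x : ℕ × ℕ) (m : ℕ) :
    potential r x (m + 1 - tieInd x) = tieFactor r ^ m * gapWeight r x := by
  by_cases h : x.1 = x.2
  · rw [tieInd, if_pos h, Nat.add_sub_cancel, gapWeight_of_le h.le, mul_one]
    cases m with
    | zero => rfl
    | succ m => rw [potential, if_pos h, pow_succ]
  · rw [tieInd, if_neg h, Nat.sub_zero, potential, if_neg h]

omit hr in
lemma probFst_mul_gapWeight_add_le {β : ℝ} (hβ : 0 ≤ β) (hr1 : 1 ≤ r) (hx : IsPos x) :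
    probFst β r x * gapWeight r (succFst x) + probSnd β r x * gapWeight r (succSnd x)
      ≤ if x.1 = x.2 then tieFactor r else gapWeight r x := by
  have hr : 0 < r := by linarith
  rcases lt_trichotomy x.1 x.2 with hlt | heq | hgt
  · rw [if_neg hlt.ne, gapWeight_of_le hlt.le, gapWeight_of_le (by simp [succFst]; omega),
      gapWeight_of_le (by simp [succSnd]; omega), mul_one, mul_one, probFst_add_probSnd hr hx]
  · obtain ⟨z, w⟩ := x
    obtain rfl : z = w := heq
    rw [if_pos rfl, gapWeight_succFst_of_le hr le_rfl, gapWeight_of_le le_rfl,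
      gapWeight_of_le (by simp [succSnd]), probFst_of_tie hr hx.1, probSnd_of_tie hr hx.1,
      tieFactor]
    field_simp; norm_num
  · rw [if_neg hgt.ne', gapWeight_succFst_of_le hr hgt.le, gapWeight_succSnd_of_lt hr hgt]
    have := probFst_mul_inv_add_probSnd_mul_le hβ hr1 hx hgt.le
    have := gapWeight_pos hr x
    nlinarith

omit hr in
lemma tieTail_le_potential {β : ℝ} (hβ : 0 ≤ β) (hr1 : 1 ≤ r) (s : ℕ) (hx : IsPos x)
    (m : ℕ) : tieTail β r s x m ≤ potential r x m := by
  have hr : 0 < r := by linarith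
  induction s generalizing x m with
  | zero =>
    cases m
    · simp [potential]
    · exact potential_nonneg hr x _
  | succ s ih =>
    cases m with
    | zero => simp [potential]
    | succ m =>
      have := probFst_pos (β := β) hr hx; have := probSnd_pos (β := β) hr hx
      have := tieFactor_pos hr
      calc tieTail β r (s + 1) x (m + 1)
          ≤ probFst β r x * potential r (succFst x) (m + 1 - tieInd (succFst x))
            + probSnd β r x * potential r (succSnd x) (m + 1 - tieInd (succSnd x)) := by
            rw [tieTail_succ]; gcongr; exacts [ih hx.succFst _, ih hx.succSnd _]
        _ = tieFactor r ^ m * (probFst β r x * gapWeight r (succFst x)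
              + probSnd β r x * gapWeight r (succSnd x)) := by
            rw [potential_sub_tieInd, potential_sub_tieInd]; ring
        _ ≤ potential r x (m + 1) := by
            rw [potential]; gcongr; exact probFst_mul_gapWeight_add_le hβ hr1 hx

end Potential

def endpoint (x : ℕ × ℕ) : List Bool → ℕ × ℕ
  | [] => x
  | c :: l => endpoint (step c x) l

def pathWeight (β r : ℝ) (x : ℕ × ℕ) : List Bool → ℝ
  | [] => 1
  | c :: l => stepProb β r c x * pathWeight β r (step c x) l

def pathTies (x : ℕ × ℕ) : List Bool → ℕ
  | [] => 0
  | c :: l => tieInd (step c x) + pathTies (step c x) l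

lemma endpoint_append (x : ℕ × ℕ) (l l' : List Bool) :
    endpoint x (l ++ l') = endpoint (endpoint x l) l' := by
  induction l generalizing x with
  | nil => rfl
  | cons c l ih => exact ih _

lemma endpoint_replicate_true (u v k : ℕ) :
    endpoint (u, v) (List.replicate k true) = (u + k, v) := by
  induction k generalizing u with
  | zero => rfl
  | succ k ih =>
    rw [List.replicate_succ, endpoint, step, succFst, ih, Nat.add_right_comm, Nat.add_assoc]

lemma endpoint_replicate_false (u v k : ℕ) :
    endpoint (u, v) (List.replicate k false) = (u, v + k) := by
  induction k generalizing v with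
  | zero => rfl
  | succ k ih =>
    rw [List.replicate_succ, endpoint, step, succSnd, ih, Nat.add_right_comm, Nat.add_assoc]

lemma exists_endpoint_eq_tie (x : ℕ × ℕ) (z : ℕ) :
    ∃ (l : List Bool) (w : ℕ), endpoint x l = (w, w) ∧ z ≤ w := by
  refine ⟨List.replicate (x.2 + z) true ++ List.replicate (x.1 + z) false, x.1 + x.2 + z, ?_,
    by omega⟩
  rw [endpoint_append, endpoint_replicate_true, endpoint_replicate_false]
  ext <;> simp only <;> omega

lemma tieInd_endpoint_le (x : ℕ × ℕ) (l : List Bool) :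
    tieInd (endpoint x l) ≤ tieInd x + pathTies x l := by
  induction l generalizing x with
  | nil => simp [endpoint, pathTies]
  | cons c l ih => have := ih (step c x); simp only [endpoint, pathTies]; omega

lemma IsPos.endpoint {x : ℕ × ℕ} (hx : IsPos x) (l : List Bool) : IsPos (endpoint x l) := by
  induction l generalizing x with
  | nil => exact hx
  | cons c l ih => exact ih (hx.step c)

section PathWeight

variable {β r : ℝ} (hr : 0 < r)
include hr

lemma pathWeight_pos {x : ℕ × ℕ} (hx : IsPos x) (l : List Bool) : 0 < pathWeight β r x l := by
  induction l generalizing x with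
  | nil => exact one_pos
  | cons c l ih => exact mul_pos (stepProb_pos hr hx c) (ih (hx.step c))

lemma pathWeight_le_one {x : ℕ × ℕ} (hx : IsPos x) (l : List Bool) :
    pathWeight β r x l ≤ 1 := by
  induction l generalizing x with
  | nil => exact le_rfl
  | cons c l ih =>
    exact mul_le_one₀ (stepProb_le_one hr hx c) (pathWeight_pos hr (hx.step c) l).le
      (ih (hx.step c))

lemma stepProb_mul_tieTail_le (c : Bool) (s : ℕ) {x : ℕ × ℕ} (hx : IsPos x) (m : ℕ) :
    stepProb β r c x * tieTail β r s (step c x) (m + 1 - tieInd (step c x))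
      ≤ tieTail β r (s + 1) x (m + 1) := by
  have := probFst_pos (β := β) hr hx; have := probSnd_pos (β := β) hr hx
  have := tieTail_nonneg (β := β) hr s hx.succFst (m + 1 - tieInd (succFst x))
  have := tieTail_nonneg (β := β) hr s hx.succSnd (m + 1 - tieInd (succSnd x))
  rw [tieTail_succ]
  cases c <;> simp only [stepProb, step] <;> nlinarith

lemma pathWeight_mul_tieTail_le {x : ℕ × ℕ} (hx : IsPos x) (l : List Bool) (s m : ℕ) :
    pathWeight β r x l * tieTail β r s (endpoint x l) (m - pathTies x l)
      ≤ tieTail β r (l.length + s) x m := by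
  induction l generalizing x m with
  | nil => simp [pathWeight, endpoint, pathTies]
  | cons c l ih =>
    cases m with
    | zero => simpa using pathWeight_le_one hr hx (c :: l)
    | succ m =>
      calc pathWeight β r x (c :: l)
            * tieTail β r s (endpoint x (c :: l)) (m + 1 - pathTies x (c :: l))
          = stepProb β r c x * (pathWeight β r (step c x) l * tieTail β r s
              (endpoint (step c x) l) (m + 1 - tieInd (step c x) - pathTies (step c x) l)) := by
            rw [pathWeight, endpoint, pathTies, Nat.sub_add_eq, mul_assoc]
        _ ≤ stepProb β r c x
            * tieTail β r (l.length + s) (step c x) (m + 1 - tieInd (step c x)) :=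
            mul_le_mul_of_nonneg_left (ih (hx.step c) _) (stepProb_pos hr hx c).le
        _ ≤ tieTail β r ((c :: l).length + s) x (m + 1) := by
            rw [List.length_cons, add_right_comm]
            exact stepProb_mul_tieTail_le hr c _ hx m

end PathWeight

/-- `coinHit p M d` is the probability that a `±1` walk started at `d`, stepping up with
probability `p`, hits `0` within `M` steps. -/
def coinHit (p : ℝ) : ℕ → ℕ → ℝ
  | _, 0 => 1
  | 0, _ + 1 => 0
  | M + 1, d + 1 => p * coinHit p M (d + 2) + (1 - p) * coinHit p M d

@[simp]
lemma coinHit_zero_right (p : ℝ) (M : ℕ) : coinHit p M 0 = 1 := by cases M <;> rfl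

lemma coinHit_succ (p : ℝ) (M d : ℕ) :
    coinHit p (M + 1) (d + 1) = p * coinHit p M (d + 2) + (1 - p) * coinHit p M d := rfl

section Coin

variable {p : ℝ} (hp0 : 0 ≤ p) (hp1 : p ≤ 1)
include hp0 hp1

lemma coinHit_nonneg (M d : ℕ) : 0 ≤ coinHit p M d := by
  induction M generalizing d with
  | zero => cases d <;> simp [coinHit]
  | succ M ih =>
    cases d with
    | zero => simp
    | succ d => have := ih (d + 2); have := ih d; rw [coinHit_succ]; nlinarith

lemma coinHit_le_one (M d : ℕ) : coinHit p M d ≤ 1 := by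
  induction M generalizing d with
  | zero => cases d <;> simp [coinHit]
  | succ M ih =>
    cases d with
    | zero => simp
    | succ d =>
      have := ih (d + 2); have := ih d
      have := coinHit_nonneg hp0 hp1 M (d + 2); have := coinHit_nonneg hp0 hp1 M d
      rw [coinHit_succ]; nlinarith

lemma coinHit_le_coinHit_succ (M d : ℕ) : coinHit p M d ≤ coinHit p (M + 1) d := by
  induction M generalizing d with
  | zero =>
    cases d with
    | zero => simp
    | succ d => exact coinHit_nonneg hp0 hp1 1 (d + 1)
  | succ M ih =>
    cases d with
    | zero => simp
    | succ d =>
      have := ih (d + 2); have := ih d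
      rw [coinHit_succ, coinHit_succ]; nlinarith

lemma coinHit_mono (d : ℕ) : Monotone fun M => coinHit p M d :=
  monotone_nat_of_le_succ fun M => coinHit_le_coinHit_succ hp0 hp1 M d

/-- To hit `0` from `e + d`, first hit `d` and then `0`. -/
lemma coinHit_mul_coinHit_le (M₁ M₂ e d : ℕ) :
    coinHit p M₁ e * coinHit p M₂ d ≤ coinHit p (M₁ + M₂) (e + d) := by
  induction M₁ generalizing e with
  | zero =>
    cases e with
    | zero => simp
    | succ e => simpa [coinHit] using coinHit_nonneg hp0 hp1 M₂ (e + 1 + d)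
  | succ M₁ ih =>
    cases e with
    | zero => simpa using coinHit_mono hp0 hp1 d (Nat.le_add_left M₂ (M₁ + 1))
    | succ e =>
      have h₁ :
          coinHit p M₁ (e + 2) * coinHit p M₂ d ≤ coinHit p (M₁ + M₂) (e + d + 2) := by
        simpa only [Nat.add_right_comm e 2 d] using ih (e + 2)
      have h₂ := ih e
      have := coinHit_nonneg hp0 hp1 M₂ d
      rw [Nat.add_right_comm, Nat.add_right_comm e, coinHit_succ, coinHit_succ]
      nlinarith

lemma coinHit_two_mul_add_one_ge (M : ℕ) :
    (1 - p) + p * coinHit p M 1 ^ 2 ≤ coinHit p (2 * M + 1) 1 := by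
  have := coinHit_mul_coinHit_le hp0 hp1 M M 1 1
  rw [coinHit_succ, coinHit_zero_right, ← two_mul] at *
  nlinarith

omit hp0 in
/-- The limit `L` of `coinHit p M 1` satisfies `(1 - p) + p L² ≤ L`, which forces
`min 1 ((1 - p) / p) ≤ L`. -/
lemma eventually_lt_coinHit (hp0 : 0 < p) {a : ℝ} (ha : a < min 1 ((1 - p) / p)) :
    ∀ᶠ M in atTop, a < coinHit p M 1 := by
  have hmono := coinHit_mono hp0.le hp1 1
  have hbdd : BddAbove (Set.range fun M => coinHit p M 1) :=
    ⟨1, by rintro _ ⟨M, rfl⟩; exact coinHit_le_one hp0.le hp1 M 1⟩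
  have hlim := tendsto_atTop_ciSup hmono hbdd
  set L := ⨆ M, coinHit p M 1
  have hfix : (1 - p) + p * L ^ 2 ≤ L :=
    le_of_tendsto' ((hlim.pow 2).const_mul p |>.const_add (1 - p)) fun M =>
      (coinHit_two_mul_add_one_ge hp0.le hp1 M).trans (le_ciSup hbdd _)
  have hmin : min 1 ((1 - p) / p) ≤ L := by
    by_contra! h
    have h1 : L < 1 := h.trans_le (min_le_left _ _)
    have h2 : p * L < 1 - p := by
      have := h.trans_le (min_le_right _ _); rwa [lt_div_iff₀ hp0, mul_comm] at this
    nlinarith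
  exact (tendsto_order.1 hlim).1 a (ha.trans_le hmin)

end Coin

def stopAtTie (f : ℕ × ℕ → ℝ) (y : ℕ × ℕ) : ℝ := if y.1 = y.2 then 1 else f y

/-- `returnMass β r M x` is the probability that the urn started at `x` has a tie at one of the
times `1, …, M`. -/
def returnMass (β r : ℝ) : ℕ → ℕ × ℕ → ℝ
  | 0, _ => 0
  | M + 1, x => probFst β r x * stopAtTie (returnMass β r M) (succFst x)
      + probSnd β r x * stopAtTie (returnMass β r M) (succSnd x)

/-- While both coordinates stay in `[z, z + M]`, each step probability is at least
`boxFactor β z M` times the corresponding step probability at a tie. -/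
def boxFactor (β : ℝ) (z M : ℕ) : ℝ := ((z : ℝ) / (z + M)) ^ β

lemma tendsto_boxFactor (β : ℝ) (M : ℕ) :
    Tendsto (fun z => boxFactor β z M) atTop (𝓝 1) := by
  simpa [boxFactor, Function.comp_def] using
    (Real.continuousAt_rpow_const 1 β (Or.inl one_ne_zero)).tendsto.comp
      (tendsto_natCast_div_add_atTop (M : ℝ))

section Box

variable {β r : ℝ} {z M : ℕ} (hz : 0 < z)
include hz

lemma boxFactor_pos : 0 < boxFactor β z M := by unfold boxFactor; positivity

omit hz in
lemma boxFactor_le_one (hβ : 0 ≤ β) : boxFactor β z M ≤ 1 :=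
  Real.rpow_le_one (by positivity) (div_le_one_of_le₀ (by simp) (by positivity)) hβ

variable (hβ : 0 ≤ β) (hr : 0 < r) {x : ℕ × ℕ}
  (h₁ : z ≤ x.1) (h₂ : z ≤ x.2) (h₃ : x.1 ≤ z + M) (h₄ : x.2 ≤ z + M)
include hβ hr h₁ h₂ h₃ h₄

lemma boxFactor_mul_le_probFst_and_probSnd :
    boxFactor β z M * (r / (r + 1)) ≤ probFst β r x
      ∧ boxFactor β z M * (1 - r / (r + 1)) ≤ probSnd β r x := by
  have hz' : (0 : ℝ) < z := by exact_mod_cast hz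
  have hx : IsPos x := ⟨hz.trans_le h₁, hz.trans_le h₂⟩
  have hu := rpow_fst_pos (β := β) hx
  have hv := rpow_snd_pos (β := β) hx
  have hzu : (z : ℝ) ^ β ≤ (x.1 : ℝ) ^ β := by gcongr
  have hzv : (z : ℝ) ^ β ≤ (x.2 : ℝ) ^ β := by gcongr
  have hub : (x.1 : ℝ) ^ β ≤ ((z : ℝ) + M) ^ β := by gcongr; exact_mod_cast h₃
  have hvb : (x.2 : ℝ) ^ β ≤ ((z : ℝ) + M) ^ β := by gcongr; exact_mod_cast h₄
  have hden : r * (x.1 : ℝ) ^ β + (x.2 : ℝ) ^ β ≤ (r + 1) * ((z : ℝ) + M) ^ β := by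
    nlinarith
  have hzM : (0 : ℝ) < ((z : ℝ) + M) ^ β := by positivity
  rw [boxFactor, Real.div_rpow hz'.le (by positivity), probFst_eq, probSnd_eq]
  constructor
  · calc (z : ℝ) ^ β / ((z : ℝ) + M) ^ β * (r / (r + 1))
        = r * (z : ℝ) ^ β / ((r + 1) * ((z : ℝ) + M) ^ β) := by field_simp
      _ ≤ _ := by gcongr
  · calc (z : ℝ) ^ β / ((z : ℝ) + M) ^ β * (1 - r / (r + 1))
        = (z : ℝ) ^ β / ((r + 1) * ((z : ℝ) + M) ^ β) := by field_simp; ring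
      _ ≤ _ := by gcongr

end Box

lemma mul_coinHit_succ_le {c p a b u v : ℝ} {K d : ℕ} (hc : 0 ≤ c) (hp0 : 0 ≤ p)
    (hp1 : p ≤ 1) (ha : c * p ≤ a) (hb : c * (1 - p) ≤ b)
    (hu : c ^ K * coinHit p K (d + 2) ≤ u) (hv : c ^ K * coinHit p K d ≤ v) :
    c ^ (K + 1) * coinHit p (K + 1) (d + 1) ≤ a * u + b * v := by
  have h₁ : 0 ≤ c ^ K * coinHit p K (d + 2) := by
    have := coinHit_nonneg hp0 hp1 K (d + 2); positivity
  have h₂ : 0 ≤ c ^ K * coinHit p K d := by have := coinHit_nonneg hp0 hp1 K d; positivity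
  calc c ^ (K + 1) * coinHit p (K + 1) (d + 1)
      = c * p * (c ^ K * coinHit p K (d + 2)) + c * (1 - p) * (c ^ K * coinHit p K d) := by
        rw [coinHit_succ]; ring
    _ ≤ a * u + b * v := by
        gcongr
        · exact (mul_nonneg hc hp0).trans ha
        · exact (mul_nonneg hc (by linarith)).trans hb

section Comparison

variable {β r : ℝ} (hβ : 0 ≤ β) (hr : 0 < r) {z M : ℕ} (hz : 0 < z)
include hβ hr hz

/-- Inside the box `[z, z + M]²` the gap `|x.1 - x.2|` dominates a biased coin walk that is
killed with probability `1 - boxFactor β z M` at each step. -/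
lemma boxFactor_pow_mul_coinHit_le (K : ℕ) {x : ℕ × ℕ} (h₁ : z ≤ x.1) (h₂ : z ≤ x.2)
    (h₃ : x.1 + K ≤ z + M) (h₄ : x.2 + K ≤ z + M) :
    (x.2 ≤ x.1 → boxFactor β z M ^ K * coinHit (r / (r + 1)) K (x.1 - x.2)
        ≤ stopAtTie (returnMass β r K) x)
      ∧ (x.1 ≤ x.2 → boxFactor β z M ^ K * coinHit (1 - r / (r + 1)) K (x.2 - x.1)
        ≤ stopAtTie (returnMass β r K) x) := by
  set c := boxFactor β z M
  have hc0 : 0 < c := boxFactor_pos hz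
  have hp0 : 0 ≤ r / (r + 1) := by positivity
  have hp1 : r / (r + 1) ≤ 1 := div_le_one_of_le₀ (by linarith) (by positivity)
  have htie : ∀ K {y : ℕ × ℕ}, y.1 = y.2 → c ^ K ≤ stopAtTie (returnMass β r K) y :=
    fun K y h => by simpa [stopAtTie, h] using pow_le_one₀ hc0.le (boxFactor_le_one hβ)
  induction K generalizing x with
  | zero =>
    rcases eq_or_ne x.1 x.2 with he | hne
    · exact ⟨fun _ => by simpa [he] using htie 0 he, fun _ => by simpa [he] using htie 0 he⟩
    · refine ⟨fun h => ?_, fun h => ?_⟩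
      · obtain ⟨d, hd⟩ : ∃ d, x.1 - x.2 = d + 1 := ⟨x.1 - x.2 - 1, by omega⟩
        simp [stopAtTie, hne, hd, coinHit, returnMass]
      · obtain ⟨d, hd⟩ : ∃ d, x.2 - x.1 = d + 1 := ⟨x.2 - x.1 - 1, by omega⟩
        simp [stopAtTie, hne, hd, coinHit, returnMass]
  | succ K ih =>
    obtain ⟨hA, hB⟩ :=
      boxFactor_mul_le_probFst_and_probSnd (M := M) hz hβ hr h₁ h₂ (by omega) (by omega)
    have ihFst := ih (x := succFst x) (by simp [succFst]; omega) h₂ (by simp [succFst]; omega)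
      (by simp [succFst]; omega)
    have ihSnd := ih (x := succSnd x) h₁ (by simp [succSnd]; omega) (by simp [succSnd]; omega)
      (by simp [succSnd]; omega)
    simp only [succFst, succSnd] at ihFst ihSnd
    rcases lt_trichotomy x.1 x.2 with hlt | he | hgt
    · refine ⟨fun h => absurd h (by omega), fun _ => ?_⟩
      obtain ⟨d, hd⟩ : ∃ d, x.2 - x.1 = d + 1 := ⟨x.2 - x.1 - 1, by omega⟩
      rw [hd, stopAtTie, if_neg hlt.ne, returnMass, add_comm (probFst β r x * _)]
      refine mul_coinHit_succ_le hc0.le (by linarith) (by linarith) hB (by rwa [sub_sub_cancel])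
        ?_ ?_
      · simpa [succFst, succSnd, show x.2 + 1 - x.1 = d + 2 by omega] using (ihSnd.2 (by omega))
      · simpa [succFst, succSnd, show x.2 - (x.1 + 1) = d by omega] using (ihFst.2 (by omega))
    · exact ⟨fun _ => by simpa [he] using htie (K + 1) he,
        fun _ => by simpa [he] using htie (K + 1) he⟩
    · refine ⟨fun _ => ?_, fun h => absurd h (by omega)⟩
      obtain ⟨d, hd⟩ : ∃ d, x.1 - x.2 = d + 1 := ⟨x.1 - x.2 - 1, by omega⟩
      rw [hd, stopAtTie, if_neg hgt.ne', returnMass]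
      refine mul_coinHit_succ_le hc0.le hp0 hp1 hA hB ?_ ?_
      · simpa [succFst, succSnd, show x.1 + 1 - x.2 = d + 2 by omega] using (ihFst.1 (by omega))
      · simpa [succFst, succSnd, show x.1 - (x.2 + 1) = d by omega] using (ihSnd.1 (by omega))

end Comparison

section ReturnToTie

variable {β r : ℝ} (hβ : 0 ≤ β)
include hβ

lemma boxFactor_pow_mul_le_returnMass_of_tie (hr : 0 < r) {z : ℕ} (hz : 0 < z) (M : ℕ) :
    boxFactor β z (M + 1) ^ (M + 1) * (r / (r + 1) * coinHit (r / (r + 1)) M 1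
        + (1 - r / (r + 1)) * coinHit (1 - r / (r + 1)) M 1)
      ≤ returnMass β r (M + 1) (z, z) := by
  set c := boxFactor β z (M + 1)
  set p := r / (r + 1)
  have hc0 : 0 < c := boxFactor_pos hz
  have hp0 : 0 ≤ p := by positivity
  have hp1 : p ≤ 1 := div_le_one_of_le₀ (by linarith) (by positivity)
  have hFst := (boxFactor_pow_mul_coinHit_le hβ hr hz (M := M + 1) M (x := (z + 1, z))
    (by simp) le_rfl (by omega) (by omega)).1 (by simp)
  have hSnd := (boxFactor_pow_mul_coinHit_le hβ hr hz (M := M + 1) M (x := (z, z + 1))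
    le_rfl (by simp) (by omega) (by omega)).2 (by simp)
  simp only [Nat.add_sub_cancel_left] at hFst hSnd
  have hX := coinHit_nonneg hp0 hp1 M 1
  have hY := coinHit_nonneg (p := 1 - p) (by linarith) (by linarith) M 1
  have hcM : c ^ (M + 1) ≤ c ^ M :=
    pow_le_pow_of_le_one hc0.le (boxFactor_le_one hβ) (by omega)
  have hSnd_eq : probSnd β r (z, z) = 1 - p := by
    rw [probSnd_of_tie hr hz]; simp only [p]; field_simp; ring
  rw [returnMass, probFst_of_tie hr hz, hSnd_eq]
  calc c ^ (M + 1) * (p * coinHit p M 1 + (1 - p) * coinHit (1 - p) M 1)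
      ≤ p * (c ^ M * coinHit p M 1) + (1 - p) * (c ^ M * coinHit (1 - p) M 1) := by
        nlinarith [mul_le_mul_of_nonneg_right hcM hX, mul_le_mul_of_nonneg_right hcM hY]
    _ ≤ p * stopAtTie (returnMass β r M) (z + 1, z)
          + (1 - p) * stopAtTie (returnMass β r M) (z, z + 1) := by
        gcongr

omit hβ in
/-- After a first step away from a tie the gap is a biased walk, which comes back with
probability `r⁻¹` from above and `1` from below; the average is
`r / (r + 1) * r⁻¹ + 1 / (r + 1) * 1 = tieFactor r`. -/
lemma exists_tieFactor_sub_le_coinHit (hr : 1 < r) {δ : ℝ} (hδ : 0 < δ) :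
    ∃ M, tieFactor r - δ ≤ r / (r + 1) * coinHit (r / (r + 1)) M 1
      + (1 - r / (r + 1)) * coinHit (1 - r / (r + 1)) M 1 := by
  set p := r / (r + 1)
  have hr0 : 0 < r := by linarith
  have hp0 : 0 < p := by positivity
  have hp1 : p < 1 := (div_lt_one (by positivity)).2 (by linarith)
  have hrinv : r⁻¹ < 1 := inv_lt_one_of_one_lt₀ hr
  have hFst : ∀ᶠ M in atTop, r⁻¹ - δ < coinHit p M 1 := by
    refine eventually_lt_coinHit hp1.le hp0 (lt_min (by linarith) ?_)
    rw [show (1 - p) / p = r⁻¹ by simp only [p]; field_simp; ring]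
    linarith
  have hSnd : ∀ᶠ M in atTop, 1 - δ < coinHit (1 - p) M 1 := by
    refine eventually_lt_coinHit (by linarith) (by linarith)
      (lt_min (by linarith) ?_)
    rw [show (1 - (1 - p)) / (1 - p) = r by simp only [p]; field_simp; ring]
    linarith
  obtain ⟨M, hM₁, hM₂⟩ := (hFst.and hSnd).exists
  refine ⟨M, ?_⟩
  have : p * (r⁻¹ - δ) + (1 - p) * (1 - δ) = tieFactor r - δ := by
    simp only [p, tieFactor]; field_simp; ring
  rw [← this]
  gcongr

lemma exists_eventually_le_returnMass (hr : 1 < r) {ρ : ℝ} (hρ : ρ < tieFactor r) :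
    ∃ M, ∀ᶠ z in atTop, ρ ≤ returnMass β r M (z, z) := by
  set p := r / (r + 1)
  set δ := (tieFactor r - ρ) / 2
  have hρδ : ρ < tieFactor r - δ := by simp only [δ]; linarith
  obtain ⟨M, hB⟩ := exists_tieFactor_sub_le_coinHit hr (show 0 < δ by simp only [δ]; linarith)
  have hlim : Tendsto (fun z => boxFactor β z (M + 1) ^ (M + 1) * (tieFactor r - δ)) atTop
      (𝓝 (tieFactor r - δ)) := by
    simpa using ((tendsto_boxFactor β (M + 1)).pow (M + 1)).mul_const (tieFactor r - δ)
  refine ⟨M + 1, ?_⟩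
  filter_upwards [(tendsto_order.1 hlim).1 ρ hρδ, eventually_gt_atTop 0] with z hz hz0
  have := boxFactor_pos (β := β) (M := M + 1) hz0
  calc ρ ≤ boxFactor β z (M + 1) ^ (M + 1) * (tieFactor r - δ) := hz.le
    _ ≤ boxFactor β z (M + 1) ^ (M + 1)
          * (p * coinHit p M 1 + (1 - p) * coinHit (1 - p) M 1) := by
        gcongr
    _ ≤ returnMass β r (M + 1) (z, z) :=
        boxFactor_pow_mul_le_returnMass_of_tie hβ (by linarith) hz0 M

end ReturnToTie

section Chain

variable {β r : ℝ} (hr : 0 < r) {z₀ : ℕ} (hz₀ : 0 < z₀)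
include hr hz₀

lemma returnMass_mul_le_tieTail {s n : ℕ} {C : ℝ}
    (hC : ∀ z, z₀ ≤ z → C ≤ tieTail β r s (z, z) n) (K : ℕ) {x : ℕ × ℕ}
    (h₁ : z₀ ≤ x.1) (h₂ : z₀ ≤ x.2) :
    returnMass β r K x * C ≤ tieTail β r (K + s) x (n + 1) := by
  have hx : ∀ {y : ℕ × ℕ}, z₀ ≤ y.1 → z₀ ≤ y.2 → IsPos y := fun h₁ h₂ =>
    ⟨hz₀.trans_le h₁, hz₀.trans_le h₂⟩
  induction K generalizing x with
  | zero => simpa [returnMass] using tieTail_nonneg hr s (hx h₁ h₂) (n + 1)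
  | succ K ih =>
    have child : ∀ {y : ℕ × ℕ}, z₀ ≤ y.1 → z₀ ≤ y.2 →
        stopAtTie (returnMass β r K) y * C ≤ tieTail β r (K + s) y (n + 1 - tieInd y) := by
      intro y h₁ h₂
      unfold stopAtTie tieInd
      split_ifs with h
      · obtain ⟨w, _⟩ := y
        obtain rfl : w = _ := h
        rw [one_mul, Nat.add_sub_cancel]
        exact (hC w h₁).trans (tieTail_mono hr (hx h₁ h₂) n (Nat.le_add_left s K))
      · simpa using ih h₁ h₂
    have := probFst_pos (β := β) hr (hx h₁ h₂)
    have := probSnd_pos (β := β) hr (hx h₁ h₂)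
    rw [returnMass, Nat.add_right_comm, tieTail_succ, add_mul, mul_assoc, mul_assoc]
    gcongr
    · exact child (by simp [succFst]; omega) h₂
    · exact child h₁ (by simp [succSnd]; omega)

lemma pow_le_tieTail {M : ℕ} {ρ : ℝ} (hρ : 0 ≤ ρ)
    (hret : ∀ z, z₀ ≤ z → ρ ≤ returnMass β r M (z, z)) (n : ℕ) {z : ℕ}
    (hz : z₀ ≤ z) :
    ρ ^ n ≤ tieTail β r (n * M) (z, z) n := by
  induction n generalizing z with
  | zero => simp
  | succ n ih =>
    calc ρ ^ (n + 1) ≤ returnMass β r M (z, z) * ρ ^ n := by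
          rw [pow_succ']; gcongr; exact hret z hz
      _ ≤ tieTail β r ((n + 1) * M) (z, z) (n + 1) := by
          rw [Nat.succ_mul, add_comm]
          exact returnMass_mul_le_tieTail hr hz₀ (fun z hz => ih hz) M hz hz

end Chain

def stepLists : ℕ → Finset (List Bool)
  | 0 => {[]}
  | s + 1 => (stepLists s).image (true :: ·) ∪ (stepLists s).image (false :: ·)

lemma mem_stepLists {s : ℕ} {l : List Bool} : l ∈ stepLists s ↔ l.length = s := by
  induction s generalizing l with
  | zero => simp [stepLists]
  | succ s ih =>
    cases l with
    | nil => simp [stepLists]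
    | cons c l => cases c <;> simp [stepLists, ih]

lemma sum_stepLists_succ (s : ℕ) (F : List Bool → ℝ) :
    ∑ l ∈ stepLists (s + 1), F l
      = ∑ l ∈ stepLists s, F (true :: l) + ∑ l ∈ stepLists s, F (false :: l) := by
  rw [stepLists, Finset.sum_union, Finset.sum_image, Finset.sum_image] <;>
    simp [Finset.disjoint_left]

section Sums

variable {β r : ℝ} (hr : 0 < r)
include hr

lemma sum_pathWeight (s : ℕ) {x : ℕ × ℕ} (hx : IsPos x) :
    ∑ l ∈ stepLists s, pathWeight β r x l = 1 := by
  induction s generalizing x with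
  | zero => simp [stepLists, pathWeight]
  | succ s ih =>
    simp only [sum_stepLists_succ, pathWeight, ← Finset.mul_sum, ih (hx.step _)]
    simpa [stepProb] using probFst_add_probSnd hr hx

omit hr in
lemma ite_pathTies_cons (c : Bool) (x : ℕ × ℕ) (l : List Bool) (m : ℕ) :
    (if m + 1 ≤ pathTies x (c :: l) then pathWeight β r x (c :: l) else 0)
      = stepProb β r c x * if m + 1 - tieInd (step c x) ≤ pathTies (step c x) l
          then pathWeight β r (step c x) l else 0 := by
  simp only [pathTies, pathWeight, mul_ite, mul_zero]
  exact if_congr (by omega) rfl rfl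

lemma tieTail_eq_sum (s : ℕ) {x : ℕ × ℕ} (hx : IsPos x) (m : ℕ) :
    tieTail β r s x m
      = ∑ l ∈ stepLists s, if m ≤ pathTies x l then pathWeight β r x l else 0 := by
  induction s generalizing x m with
  | zero => cases m <;> simp [stepLists, pathTies, pathWeight, tieTail]
  | succ s ih =>
    cases m with
    | zero => simp [sum_pathWeight hr _ hx]
    | succ m =>
      simp only [sum_stepLists_succ, ite_pathTies_cons, ← Finset.mul_sum, ← ih (hx.step _)]
      rfl

end Sums

def trajectory (x : ℕ × ℕ) (l : List Bool) (t : ℕ) : ℕ × ℕ := endpoint x (l.take t)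

lemma trajectory_cons_succ (x : ℕ × ℕ) (c : Bool) (l : List Bool) (t : ℕ) :
    trajectory x (c :: l) (t + 1) = trajectory (step c x) l t := rfl

lemma step_injective_left {x : ℕ × ℕ} {c c' : Bool} (h : step c x = step c' x) : c = c' := by
  cases c <;> cases c' <;> simp_all [step, succFst, succSnd, Prod.ext_iff]

lemma eq_of_trajectory_eq {x : ℕ × ℕ} {l l' : List Bool} (hlen : l.length = l'.length)
    (h : ∀ t ≤ l.length, trajectory x l t = trajectory x l' t) : l = l' := by
  induction l generalizing x l' with
  | nil => exact (List.length_eq_zero_iff.1 hlen.symm).symm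
  | cons c l ih =>
    obtain _ | ⟨c', l'⟩ := l'
    · simp at hlen
    obtain rfl : c = c' := step_injective_left (h 1 (by simp))
    exact congrArg _ (ih (by simpa using hlen) fun t ht => h (t + 1) (by simpa using ht))

lemma prod_urnStep_trajectory (β r : ℝ) (x : ℕ × ℕ) (l : List Bool) :
    ∏ t ∈ Finset.range l.length, urnStep β r (trajectory x l t) (trajectory x l (t + 1))
      = pathWeight β r x l := by
  induction l generalizing x with
  | nil => simp [pathWeight]
  | cons c l ih =>
    rw [List.length_cons, Finset.prod_range_succ']
    simp only [trajectory_cons_succ, ih, pathWeight]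
    rw [mul_comm]
    exact congrArg (· * _) (urnStep_step β r x c)

lemma numTiesUpTo_zero (ω : ℕ → ℕ × ℕ) : numTiesUpTo ω 0 = tieInd (ω 0) := by
  simp [numTiesUpTo, tieInd, Finset.filter_singleton]
  split_ifs <;> rfl

lemma numTiesUpTo_succ (ω : ℕ → ℕ × ℕ) (t : ℕ) :
    numTiesUpTo ω (t + 1) = numTiesUpTo (fun j => ω (j + 1)) t + tieInd (ω 0) := by
  simp only [numTiesUpTo, Finset.card_filter, tieInd]
  exact Finset.sum_range_succ' _ _

lemma numTiesUpTo_trajectory (x : ℕ × ℕ) (l : List Bool) :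
    numTiesUpTo (trajectory x l) l.length = tieInd x + pathTies x l := by
  induction l generalizing x with
  | nil => exact numTiesUpTo_zero _
  | cons c l ih =>
    rw [List.length_cons, numTiesUpTo_succ]
    simp only [trajectory_cons_succ, ih, pathTies]
    rw [add_comm]; rfl

lemma numTiesUpTo_congr {ω ω' : ℕ → ℕ × ℕ} {s : ℕ} (h : ∀ t ≤ s, ω t = ω' t) :
    numTiesUpTo ω s = numTiesUpTo ω' s := by
  unfold numTiesUpTo
  congr 1
  exact Finset.filter_congr fun t ht => by rw [h t (by simpa [Nat.lt_succ_iff] using ht)]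

lemma numTiesUpTo_mono (ω : ℕ → ℕ × ℕ) : Monotone (numTiesUpTo ω) := fun _ _ h =>
  Finset.card_le_card (Finset.filter_subset_filter _ (Finset.range_subset_range.2 (by omega)))

lemma le_intensity_iff {ω : ℕ → ℕ × ℕ} {n : ℕ} :
    (n : ℕ∞) ≤ intensity ω ↔ ∃ s, n ≤ numTiesUpTo ω s := by
  constructor
  · intro h
    obtain ⟨T, hT, hTn⟩ := Set.exists_subset_encard_eq h
    have hfin : T.Finite := Set.finite_of_encard_eq_coe hTn
    obtain ⟨s, hs⟩ := hfin.bddAbove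
    refine ⟨s, ?_⟩
    rw [hfin.encard_eq_coe_toFinset_card, Nat.cast_inj] at hTn
    rw [← hTn, numTiesUpTo]
    refine Finset.card_le_card fun t ht => ?_
    rw [Set.Finite.mem_toFinset] at ht
    simpa [Nat.lt_succ_iff] using ⟨hs ht, hT ht⟩
  · rintro ⟨s, hs⟩
    calc (n : ℕ∞) ≤ numTiesUpTo ω s := by exact_mod_cast hs
      _ = (↑((Finset.range (s + 1)).filter fun j => (ω j).1 = (ω j).2) : Set ℕ).encard :=
          (Set.encard_coe_eq_coe_finsetCard _).symm
      _ ≤ intensity ω :=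
          Set.encard_mono fun t ht => (Finset.mem_filter.1 (Finset.mem_coe.1 ht)).2

def cylinder (x : ℕ × ℕ) (l : List Bool) : Set (ℕ → ℕ × ℕ) :=
  {ω | ∀ t ≤ l.length, ω t = trajectory x l t}

lemma measurableSet_cylinder (x : ℕ × ℕ) (l : List Bool) : MeasurableSet (cylinder x l) := by
  simp only [cylinder, Set.ofPred_forall]
  exact .iInter fun t => .iInter fun _ => measurableSet_eq_fun (measurable_pi_apply t)
    measurable_const

lemma pairwiseDisjoint_cylinder (x : ℕ × ℕ) (s : ℕ) :
    (↑(stepLists s) : Set (List Bool)).PairwiseDisjoint (cylinder x) := by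
  intro l hl l' hl' hne
  rw [Finset.mem_coe, mem_stepLists] at hl hl'
  refine Set.disjoint_left.2 fun ω hω hω' => hne (eq_of_trajectory_eq (x := x)
    (hl.trans hl'.symm) fun t ht => (hω t ht).symm.trans (hω' t (by omega)))

lemma numTiesUpTo_of_mem_cylinder {x : ℕ × ℕ} {l : List Bool} {ω : ℕ → ℕ × ℕ}
    (hω : ω ∈ cylinder x l) : numTiesUpTo ω l.length = tieInd x + pathTies x l :=
  (numTiesUpTo_congr hω).trans (numTiesUpTo_trajectory x l)

section Measure

variable {β r : ℝ} {x₀ : ℕ × ℕ} {μ : Measure (ℕ → ℕ × ℕ)}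

lemma measure_cylinder (hμ : IsUrnProcess μ β r x₀) (l : List Bool) :
    μ (cylinder x₀ l) = ENNReal.ofReal (pathWeight β r x₀ l) := by
  have := hμ.1
  rw [← prod_urnStep_trajectory, ← hμ.2 l.length _ rfl,
    ENNReal.ofReal_toReal (measure_ne_top _ _)]
  rfl

variable (hμ : IsUrnProcess μ β r x₀) (hr : 0 < r) (hx₀ : IsPos x₀)
include hμ hr hx₀

lemma measure_biUnion_cylinder (s : ℕ) (P : List Bool → Prop) [DecidablePred P] :
    μ (⋃ l ∈ (stepLists s).filter P, cylinder x₀ l)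
      = ENNReal.ofReal (∑ l ∈ stepLists s, if P l then pathWeight β r x₀ l else 0) := by
  rw [measure_biUnion_finset ((pairwiseDisjoint_cylinder x₀ s).subset
      (Finset.coe_subset.2 (Finset.filter_subset _ _))) fun l _ => measurableSet_cylinder x₀ l,
    ← Finset.sum_filter, ENNReal.ofReal_sum_of_nonneg fun l _ => (pathWeight_pos hr hx₀ l).le]
  exact Finset.sum_congr rfl fun l _ => measure_cylinder hμ l

/-- The weights of the cylinders of length `s` add up to `1`. -/
lemma measure_compl_iUnion_cylinder (s : ℕ) :
    μ (⋃ l ∈ stepLists s, cylinder x₀ l)ᶜ = 0 := by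
  have := hμ.1
  have h := measure_biUnion_cylinder hμ hr hx₀ s (fun _ => True)
  simp only [Finset.filter_true, if_true, sum_pathWeight hr s hx₀, ENNReal.ofReal_one] at h
  exact (prob_compl_eq_zero_iff (.biUnion (Finset.countable_toSet _)
    fun l _ => measurableSet_cylinder x₀ l)).2 h

lemma measure_setOf_le_numTiesUpTo (n s : ℕ) :
    μ {ω | n ≤ numTiesUpTo ω s} = ENNReal.ofReal (tieTail β r s x₀ (n - tieInd x₀)) := by
  rw [← measure_inter_conull (measure_compl_iUnion_cylinder hμ hr hx₀ s),
    tieTail_eq_sum hr s hx₀]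
  have hP : ∀ l, n - tieInd x₀ ≤ pathTies x₀ l ↔ n ≤ tieInd x₀ + pathTies x₀ l :=
    fun l => by omega
  simp only [hP]
  rw [← measure_biUnion_cylinder hμ hr hx₀]
  congr 1
  ext ω
  simp only [Set.mem_inter_iff, Set.mem_ofPred_eq, Set.mem_iUnion, Finset.mem_filter,
    mem_stepLists, exists_prop]
  constructor
  · rintro ⟨hn, l, rfl, hω⟩
    exact ⟨l, ⟨rfl, numTiesUpTo_of_mem_cylinder hω ▸ hn⟩, hω⟩
  · rintro ⟨l, ⟨rfl, hn⟩, hω⟩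
    exact ⟨numTiesUpTo_of_mem_cylinder hω ▸ hn, l, rfl, hω⟩

lemma measure_setOf_le_intensity (n : ℕ) :
    μ {ω | (n : ℕ∞) ≤ intensity ω}
      = ⨆ s, ENNReal.ofReal (tieTail β r s x₀ (n - tieInd x₀)) := by
  have hU : {ω | (n : ℕ∞) ≤ intensity ω} = ⋃ s, {ω | n ≤ numTiesUpTo ω s} := by
    ext ω; simp [le_intensity_iff]
  have hmono : Monotone fun s => {ω | n ≤ numTiesUpTo ω s} := fun s s' h ω hω =>
    le_trans hω (numTiesUpTo_mono ω h)
  simp only [hU, hmono.measure_iUnion, measure_setOf_le_numTiesUpTo hμ hr hx₀]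

end Measure

section Bounds

variable {β r : ℝ} {x₀ : ℕ × ℕ} {μ : Measure (ℕ → ℕ × ℕ)}
  (hμ : IsUrnProcess μ β r x₀) (hβ : 0 ≤ β) (hr : 1 < r) (hx₀ : IsPos x₀)
include hμ hβ hr hx₀

lemma measure_setOf_le_intensity_toReal_le {n : ℕ} (hn : 1 ≤ n) :
    (μ {ω | (n : ℕ∞) ≤ intensity ω}).toReal
      ≤ gapWeight r x₀ * tieFactor r ^ (n - 1) := by
  have hr0 : 0 < r := by linarith
  obtain ⟨k, rfl⟩ : ∃ k, n = k + 1 := ⟨n - 1, by omega⟩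
  rw [Nat.add_sub_cancel, mul_comm, ← potential_sub_tieInd]
  refine ENNReal.toReal_le_of_le_ofReal (potential_nonneg hr0 _ _) ?_
  rw [measure_setOf_le_intensity hμ hr0 hx₀]
  exact iSup_le fun s => ENNReal.ofReal_le_ofReal (tieTail_le_potential hβ hr.le s hx₀ _)

lemma exists_mul_pow_le_measure_setOf_le_intensity {ρ : ℝ} (hρ0 : 0 ≤ ρ)
    (hρ : ρ < tieFactor r) :
    ∃ c, 0 < c ∧ ∀ n : ℕ, 1 ≤ n →
      c * ρ ^ (n - 1) ≤ (μ {ω | (n : ℕ∞) ≤ intensity ω}).toReal := by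
  have hr0 : 0 < r := by linarith
  have := hμ.1
  obtain ⟨M, hM⟩ := exists_eventually_le_returnMass hβ hr hρ
  obtain ⟨z₀, hz₀⟩ := eventually_atTop.1 (hM.and (eventually_gt_atTop 0))
  obtain ⟨l, w, hl, hw⟩ := exists_endpoint_eq_tie x₀ z₀
  have hpos := pathWeight_pos (β := β) hr0 hx₀ l
  refine ⟨pathWeight β r x₀ l, hpos, fun n hn => ?_⟩
  obtain ⟨k, rfl⟩ : ∃ k, n = k + 1 := ⟨n - 1, by omega⟩
  have hties : 1 ≤ tieInd x₀ + pathTies x₀ l := by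
    simpa [hl, tieInd] using tieInd_endpoint_le x₀ l
  have hwpos : IsPos (w, w) := hl ▸ hx₀.endpoint l
  calc pathWeight β r x₀ l * ρ ^ (k + 1 - 1)
      ≤ pathWeight β r x₀ l * tieTail β r (k * M) (w, w) k := by
        gcongr
        exact pow_le_tieTail hr0 (hz₀ z₀ le_rfl).2 hρ0 (fun z hz => (hz₀ z hz).1) k hw
    _ ≤ pathWeight β r x₀ l
          * tieTail β r (k * M) (endpoint x₀ l) (k + 1 - tieInd x₀ - pathTies x₀ l) := by
        rw [hl]; gcongr; exact tieTail_anti hr0 _ hwpos (by omega)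
    _ ≤ tieTail β r (l.length + k * M) x₀ (k + 1 - tieInd x₀) :=
        pathWeight_mul_tieTail_le hr0 hx₀ l _ _
    _ ≤ (μ {ω | ((k + 1 : ℕ) : ℕ∞) ≤ intensity ω}).toReal := by
        have h : ENNReal.ofReal (tieTail β r (l.length + k * M) x₀ (k + 1 - tieInd x₀))
            ≤ μ {ω | ((k + 1 : ℕ) : ℕ∞) ≤ intensity ω} := by
          rw [measure_setOf_le_intensity hμ hr0 hx₀]
          exact le_iSup (fun s => ENNReal.ofReal (tieTail β r s x₀ _)) _
        simpa [ENNReal.toReal_ofReal (tieTail_nonneg hr0 _ hx₀ _)] using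
          ENNReal.toReal_mono (measure_ne_top μ _) h

end Bounds

end Urn

lemma Real.tendsto_log_mul_pow_sub_one_div {c ρ : ℝ} (hc : 0 < c) (hρ : 0 < ρ) :
    Tendsto (fun n : ℕ => Real.log (c * ρ ^ (n - 1)) / n) atTop (𝓝 (Real.log ρ)) := by
  have h := (tendsto_const_div_atTop_nhds_zero_nat (Real.log c - Real.log ρ)).const_add
    (Real.log ρ)
  rw [add_zero] at h
  refine h.congr' ?_
  filter_upwards [eventually_ge_atTop 1] with n hn
  have : (n : ℝ) ≠ 0 := by positivity
  rw [Real.log_mul hc.ne' (by positivity), Real.log_pow, Nat.cast_sub hn]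
  field_simp
  ring

lemma Real.tendsto_log_div_of_geometric_bounds {f : ℕ → ℝ} {q C : ℝ} (hq : 0 < q)
    (hC : 0 < C) (hup : ∀ n, 1 ≤ n → f n ≤ C * q ^ (n - 1))
    (hlow : ∀ ρ, 0 ≤ ρ → ρ < q →
      ∃ c, 0 < c ∧ ∀ n, 1 ≤ n → c * ρ ^ (n - 1) ≤ f n) :
    Tendsto (fun n : ℕ => Real.log (f n) / n) atTop (𝓝 (Real.log q)) := by
  refine tendsto_order.2 ⟨fun a ha => ?_, fun b hb => ?_⟩
  · set ρ := Real.exp ((a + Real.log q) / 2)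
    have hρ : ρ < q := by
      rw [← Real.exp_log hq]; exact Real.exp_lt_exp.2 (by linarith)
    obtain ⟨c, hc, hcf⟩ := hlow ρ (Real.exp_pos _).le hρ
    have hlim := Real.tendsto_log_mul_pow_sub_one_div hc (Real.exp_pos ((a + Real.log q) / 2))
    rw [Real.log_exp] at hlim
    filter_upwards [(tendsto_order.1 hlim).1 a (by linarith), eventually_ge_atTop 1] with n h hn
    exact h.trans_le (by gcongr; exact hcf n hn)
  · obtain ⟨c, hc, hcf⟩ := hlow (q / 2) (by positivity) (by linarith)
    filter_upwards [(tendsto_order.1 (Real.tendsto_log_mul_pow_sub_one_div hC hq)).2 b hb,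
      eventually_ge_atTop 1] with n h hn
    have : 0 < f n := (by positivity : 0 < c * (q / 2) ^ (n - 1)).trans_le (hcf n hn)
    exact lt_of_le_of_lt (by gcongr; exact hup n hn) h

/-- For `r > 1`, the intensity of a `(β,r,x₀)`-urn process has an exponential
tail: `P[N(β,r,x₀) ≥ n] ≤ r^{-(x₀₁-x₀₂)⁺}·(2/(r+1))^{n-1}` for all `n ≥ 1`, and
`(1/n)·log P[N(β,r,x₀) ≥ n] → log(2/(r+1))` as `n → ∞`. -/
theorem stmt_17 (β r : ℝ) (hβ : 0 ≤ β) (hr : 1 < r)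
    (x₀ : ℕ × ℕ) (hx₁ : 0 < x₀.1) (hx₂ : 0 < x₀.2)
    (μ : Measure (ℕ → ℕ × ℕ)) (hμ : IsUrnProcess μ β r x₀) :
    (∀ n : ℕ, 1 ≤ n →
      (μ {ω | (n : ℕ∞) ≤ intensity ω}).toReal
        ≤ r ^ (-(max ((x₀.1 : ℝ) - (x₀.2 : ℝ)) 0)) * (2 / (r + 1)) ^ (n - 1)) ∧
    Tendsto (fun n : ℕ =>
        Real.log ((μ {ω | (n : ℕ∞) ≤ intensity ω}).toReal) / (n : ℝ))
      atTop (nhds (Real.log (2 / (r + 1)))) := by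
  have hx₀ : Urn.IsPos x₀ := ⟨hx₁, hx₂⟩
  have hr0 : 0 < r := by linarith
  have hup := fun n (hn : 1 ≤ n) =>
    Urn.measure_setOf_le_intensity_toReal_le hμ hβ hr hx₀ hn
  exact ⟨hup, Real.tendsto_log_div_of_geometric_bounds (Urn.tieFactor_pos hr0)
    (Urn.gapWeight_pos hr0 x₀) hup fun ρ hρ0 hρ =>
      Urn.exists_mul_pow_le_measure_setOf_le_intensity hμ hβ hr hx₀ hρ0 hρ⟩
end
end

section
/- Let β ≥ 0 and ε ∈ (0,1). Let (y_m) and (z_m) be sequences of positive integers with y_m/m → 1, z_m/m → 1, and q_m := y_m − z_m ≥ 9 for all m. Then for all sufficiently large m: P[ S(z_m, y_m) < (1−ε)·q_m·m^{−β} ] ≤ e^{−(1/2)ε√(q_m) + 1}, and P[ S(z_m, y_m) > (1+ε)·q_m·m^{−β} ] ≤ e^{−(1/2)ε√(q_m) + 9/2}. -/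
/-!
Each `ξ_j` has the exponential law of rate `j^β`, whose moment generating function is
`r / (r - t)` for `t < r`. Since `y_m / m → 1` and `z_m / m → 1`, for large `m` every rate `j^β`
with `z_m ≤ j < y_m` lies within a factor `1 ± ε/8` of `B = m^β`. Chernoff's bound at the tilt
`∓ B / √q_m`, with `1 - x ≤ e^{-x}` and `1 + x ≤ e^x` applied to each factor of the product of
moment generating functions, reduces both tails to elementary inequalities in `w = √q_m`.
-/

open MeasureTheory Filter

noncomputable section

/-- Partial sums `S(x,y) = Σ_{j=x}^{y-1} ξ_j`. -/
def expSum {Ω : Type*} (ξ : ℕ → Ω → ℝ) (x y : ℕ) (ω : Ω) : ℝ :=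
  ∑ j ∈ Finset.Ico x y, ξ j ω

section

open ProbabilityTheory Real

section ExponentialLaw

variable {Ω : Type*} [MeasurableSpace Ω] {P : Measure Ω} [IsProbabilityMeasure P] {X : Ω → ℝ}
  {r t : ℝ}

lemma exponentialPDF_mul_exp_mul (hr : 0 ≤ r) (hrt : t < r) (x : ℝ) :
    exponentialPDF r x * ENNReal.ofReal (exp (t * x))
      = ENNReal.ofReal (r / (r - t)) * exponentialPDF (r - t) x := by
  rcases lt_or_ge x 0 with hx | hx
  · simp [exponentialPDF_of_neg hx]
  · have hrt' : r - t ≠ 0 := by linarith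
    rw [exponentialPDF_of_nonneg hx, exponentialPDF_of_nonneg hx,
      ← ENNReal.ofReal_mul (by positivity), ← ENNReal.ofReal_mul (div_nonneg hr (by linarith))]
    congr 1
    field_simp
    rw [mul_assoc, ← exp_add]
    ring_nf

lemma lintegral_exp_mul_expMeasure (hr : 0 ≤ r) (hrt : t < r) :
    ∫⁻ x, ENNReal.ofReal (exp (t * x)) ∂expMeasure r = ENNReal.ofReal (r / (r - t)) := by
  change ∫⁻ x, _ ∂volume.withDensity (exponentialPDF r) = _
  have hpdf : ∀ r, Measurable (exponentialPDF r) := fun r =>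
    (measurable_exponentialPDFReal r).ennreal_ofReal
  rw [lintegral_withDensity_eq_lintegral_mul _ (hpdf r) (by fun_prop)]
  simp only [Pi.mul_apply, exponentialPDF_mul_exp_mul hr hrt]
  rw [lintegral_const_mul _ (hpdf _),
    lintegral_exponentialPDF_eq_one (by linarith), mul_one]

lemma map_eq_expMeasure_of_measure_lt (hX : Measurable X) (hr : 0 < r)
    (hsurv : ∀ u, 0 ≤ u → P {ω | u < X ω} = ENNReal.ofReal (exp (-r * u))) :
    P.map X = expMeasure r := by
  have := isProbabilityMeasure_expMeasure hr
  have := Measure.isProbabilityMeasure_map (μ := P) hX.aemeasurable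
  refine Measure.eq_of_cdf _ _ ?_
  ext x
  have hsurvReal : ∀ u, 0 ≤ u → P.real {ω | u < X ω} = exp (-r * u) := fun u hu => by
    rw [measureReal_def, hsurv u hu, ENNReal.toReal_ofReal (exp_nonneg _)]
  have hcompl : X ⁻¹' Set.Iic x = {ω | x < X ω}ᶜ := by ext; simp
  rw [cdf_eq_real, map_measureReal_apply hX measurableSet_Iic, cdf_expMeasure_eq hr, hcompl,
    probReal_compl_eq_one_sub (measurableSet_lt measurable_const hX)]
  split_ifs with hx
  · rw [hsurvReal x hx, neg_mul]
  · have : P.real {ω | x < X ω} = 1 := by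
      refine le_antisymm measureReal_le_one ?_
      calc 1 = P.real {ω | 0 < X ω} := by rw [hsurvReal 0 le_rfl]; simp
        _ ≤ P.real {ω | x < X ω} := measureReal_mono fun ω hω => (not_le.mp hx).trans hω
    rw [this, sub_self]

variable (hX : Measurable X) (hr : 0 < r)
  (hsurv : ∀ u, 0 ≤ u → P {ω | u < X ω} = ENNReal.ofReal (exp (-r * u)))
include hX hr hsurv

lemma lintegral_exp_mul_of_measure_lt (hrt : t < r) :
    ∫⁻ ω, ENNReal.ofReal (exp (t * X ω)) ∂P = ENNReal.ofReal (r / (r - t)) := by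
  rw [← lintegral_map (f := fun x => ENNReal.ofReal (exp (t * x))) (by fun_prop) hX,
    map_eq_expMeasure_of_measure_lt hX hr hsurv, lintegral_exp_mul_expMeasure hr.le hrt]

lemma integrable_exp_mul_of_measure_lt (hrt : t < r) :
    Integrable (fun ω => exp (t * X ω)) P := by
  refine ⟨by fun_prop, ?_⟩
  rw [hasFiniteIntegral_iff_ofReal (ae_of_all _ fun ω => (exp_pos _).le),
    lintegral_exp_mul_of_measure_lt hX hr hsurv hrt]
  exact ENNReal.ofReal_lt_top

lemma mgf_eq_of_measure_lt (hrt : t < r) : mgf X P t = r / (r - t) := by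
  rw [mgf, integral_eq_lintegral_of_nonneg_ae (ae_of_all _ fun ω => (exp_pos _).le)
    (by fun_prop), lintegral_exp_mul_of_measure_lt hX hr hsurv hrt,
    ENNReal.toReal_ofReal (div_nonneg hr.le (by linarith))]

end ExponentialLaw

section Chernoff

variable {Ω ι : Type*} [MeasurableSpace Ω] {P : Measure Ω} [IsProbabilityMeasure P]
  {ξ : ι → Ω → ℝ} {rate : ι → ℝ} {s : Finset ι} {R l : ℝ}

variable (hindep : iIndepFun ξ P) (hmeas : ∀ j, Measurable (ξ j)) (hrate : ∀ j ∈ s, 0 < rate j)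
  (hsurv : ∀ j ∈ s, ∀ u, 0 ≤ u → P {ω | u < ξ j ω} = ENNReal.ofReal (exp (-rate j * u)))
include hindep hmeas hrate hsurv

lemma measureReal_sum_le_le_exp (hl : 0 ≤ l) (hR : ∀ j ∈ s, rate j ≤ R) (a : ℝ) :
    P.real {ω | ∑ j ∈ s, ξ j ω ≤ a} ≤ exp (l * a - s.card * (l / (R + l))) := by
  have hrt : ∀ j ∈ s, -l < rate j := fun j hj => by linarith [hrate j hj]
  have hfactor : ∀ j ∈ s, mgf (ξ j) P (-l) ≤ exp (-(l / (R + l))) := fun j hj => by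
    have hr := hrate j hj
    calc mgf (ξ j) P (-l) = 1 - l / (rate j + l) := by
          rw [mgf_eq_of_measure_lt (hmeas j) hr (hsurv j hj) (hrt j hj)]
          field_simp [(add_pos_of_pos_of_nonneg hr hl).ne']
          ring
      _ ≤ 1 - l / (R + l) := by gcongr; exact hR j hj
      _ ≤ exp (-(l / (R + l))) := one_sub_le_exp_neg _
  calc P.real {ω | ∑ j ∈ s, ξ j ω ≤ a} = P.real {ω | (∑ j ∈ s, ξ j) ω ≤ a} := by
        simp only [Finset.sum_apply]
    _ ≤ exp (-(-l) * a) * mgf (∑ j ∈ s, ξ j) P (-l) :=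
        measure_le_le_exp_mul_mgf a (by linarith) (hindep.integrable_exp_mul_sum hmeas fun j hj =>
          integrable_exp_mul_of_measure_lt (hmeas j) (hrate j hj) (hsurv j hj) (hrt j hj))
    _ ≤ exp (l * a) * ∏ _j ∈ s, exp (-(l / (R + l))) := by
        rw [neg_neg, hindep.mgf_sum hmeas]
        gcongr with j hj
        · exact fun j _ => mgf_nonneg
        · exact hfactor j hj
    _ = exp (l * a - s.card * (l / (R + l))) := by
        rw [Finset.prod_const, ← exp_nat_mul, ← exp_add]
        ring_nf

lemma measureReal_le_sum_le_exp (hl : 0 ≤ l) (hlR : l < R) (hR : ∀ j ∈ s, R ≤ rate j) (a : ℝ) :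
    P.real {ω | a ≤ ∑ j ∈ s, ξ j ω} ≤ exp (-(l * a) + s.card * (l / (R - l))) := by
  have hrt : ∀ j ∈ s, l < rate j := fun j hj => hlR.trans_le (hR j hj)
  have hfactor : ∀ j ∈ s, mgf (ξ j) P l ≤ exp (l / (R - l)) := fun j hj => by
    have hr := hrt j hj
    calc mgf (ξ j) P l = l / (rate j - l) + 1 := by
          rw [mgf_eq_of_measure_lt (hmeas j) (hrate j hj) (hsurv j hj) hr]
          field_simp [(sub_pos.mpr hr).ne']
          ring
      _ ≤ l / (R - l) + 1 := by gcongr; linarith [hR j hj]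
      _ ≤ exp (l / (R - l)) := add_one_le_exp _
  calc P.real {ω | a ≤ ∑ j ∈ s, ξ j ω} = P.real {ω | a ≤ (∑ j ∈ s, ξ j) ω} := by
        simp only [Finset.sum_apply]
    _ ≤ exp (-l * a) * mgf (∑ j ∈ s, ξ j) P l :=
        measure_ge_le_exp_mul_mgf a hl (hindep.integrable_exp_mul_sum hmeas fun j hj =>
          integrable_exp_mul_of_measure_lt (hmeas j) (hrate j hj) (hsurv j hj) (hrt j hj))
    _ ≤ exp (-l * a) * ∏ _j ∈ s, exp (l / (R - l)) := by
        rw [hindep.mgf_sum hmeas]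
        gcongr with j hj
        · exact fun j _ => mgf_nonneg
        · exact hfactor j hj
    _ = exp (-(l * a) + s.card * (l / (R - l))) := by
        rw [Finset.prod_const, ← exp_nat_mul, ← exp_add]
        ring_nf

end Chernoff

lemma lower_tail_exponent_le {w ε : ℝ} (hw : 0 ≤ w) (hε : 0 ≤ ε) :
    (1 - ε) * w - w ^ 2 / ((1 + ε / 8) * w + 1) ≤ -(1 / 2) * ε * w + 1 := by
  have hd : 0 < (1 + ε / 8) * w + 1 := by positivity
  have key : (1 - ε / 8) * w - 1 ≤ w ^ 2 / ((1 + ε / 8) * w + 1) := by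
    rw [le_div_iff₀ hd]
    nlinarith [sq_nonneg (ε * w), mul_nonneg hε hw]
  nlinarith [mul_nonneg hε hw]

lemma upper_tail_exponent_le {w ε : ℝ} (hw : 3 ≤ w) (hε0 : 0 ≤ ε) (hε1 : ε < 1) :
    -((1 + ε) * w) + w ^ 2 / ((1 - ε / 8) * w - 1) ≤ -(1 / 2) * ε * w + 9 / 2 := by
  have hd : 0 < (1 - ε / 8) * w - 1 := by nlinarith
  have key : w ^ 2 / ((1 - ε / 8) * w - 1) ≤ (1 + ε / 4) * w + 2 := by
    rw [div_le_iff₀ hd]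
    nlinarith [mul_nonneg (mul_nonneg hε0 (sub_nonneg.mpr hε1.le)) (by linarith : (0 : ℝ) ≤ w - 3),
      mul_nonneg hε0 (by linarith : (0 : ℝ) ≤ w - 3)]
  nlinarith [mul_nonneg hε0 (by linarith : (0 : ℝ) ≤ w)]

section ComparableRates

variable {Ω ι : Type*} [MeasurableSpace Ω] {P : Measure Ω} [IsProbabilityMeasure P]
  {ξ : ι → Ω → ℝ} {rate : ι → ℝ} {s : Finset ι} {B ε : ℝ}

variable (hindep : iIndepFun ξ P) (hmeas : ∀ j, Measurable (ξ j)) (hrate : ∀ j ∈ s, 0 < rate j)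
  (hsurv : ∀ j ∈ s, ∀ u, 0 ≤ u → P {ω | u < ξ j ω} = ENNReal.ofReal (exp (-rate j * u)))
include hindep hmeas hrate hsurv

lemma measureReal_sum_lt_le_exp_sqrt_card (hB : 0 < B) (hε : 0 ≤ ε)
    (hR : ∀ j ∈ s, rate j ≤ (1 + ε / 8) * B) :
    P.real {ω | ∑ j ∈ s, ξ j ω < (1 - ε) * s.card * B⁻¹}
      ≤ exp (-(1 / 2) * ε * √s.card + 1) := by
  have hcard : (s.card : ℝ) = √s.card ^ 2 := (sq_sqrt (Nat.cast_nonneg _)).symm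
  have hw : 0 ≤ √(s.card : ℝ) := sqrt_nonneg _
  generalize √(s.card : ℝ) = w at hw hcard ⊢
  calc P.real {ω | ∑ j ∈ s, ξ j ω < (1 - ε) * s.card * B⁻¹}
      ≤ P.real {ω | ∑ j ∈ s, ξ j ω ≤ (1 - ε) * s.card * B⁻¹} :=
        measureReal_mono (Set.ofPred_subset_ofPred.mpr fun _ => le_of_lt)
    _ ≤ exp (B / w * ((1 - ε) * s.card * B⁻¹) - s.card * (B / w / ((1 + ε / 8) * B + B / w))) :=
        measureReal_sum_le_le_exp hindep hmeas hrate hsurv (by positivity) hR _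
    _ = exp ((1 - ε) * w - w ^ 2 / ((1 + ε / 8) * w + 1)) := by
        rw [hcard]
        rcases hw.eq_or_lt with hw0 | hw0
        · simp [← hw0]
        · field_simp
    _ ≤ exp (-(1 / 2) * ε * w + 1) := exp_le_exp.mpr (lower_tail_exponent_le hw hε)

lemma measureReal_lt_sum_le_exp_sqrt_card (hB : 0 < B) (hε0 : 0 ≤ ε) (hε1 : ε < 1) (hs : 9 ≤ s.card)
    (hR : ∀ j ∈ s, (1 - ε / 8) * B ≤ rate j) :
    P.real {ω | (1 + ε) * s.card * B⁻¹ < ∑ j ∈ s, ξ j ω}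
      ≤ exp (-(1 / 2) * ε * √s.card + 9 / 2) := by
  have hw : 3 ≤ √(s.card : ℝ) := le_sqrt_of_sq_le (by norm_num; exact_mod_cast hs)
  have hcard : (s.card : ℝ) = √s.card ^ 2 := (sq_sqrt (Nat.cast_nonneg _)).symm
  generalize √(s.card : ℝ) = w at hw hcard ⊢
  have hlR : B / w < (1 - ε / 8) * B := by
    have : 1 < (1 - ε / 8) * w := by nlinarith
    rw [div_lt_iff₀ (by linarith)]
    nlinarith [mul_lt_mul_of_pos_left this hB]
  calc P.real {ω | (1 + ε) * s.card * B⁻¹ < ∑ j ∈ s, ξ j ω}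
      ≤ P.real {ω | (1 + ε) * s.card * B⁻¹ ≤ ∑ j ∈ s, ξ j ω} :=
        measureReal_mono (Set.ofPred_subset_ofPred.mpr fun _ => le_of_lt)
    _ ≤ exp (-(B / w * ((1 + ε) * s.card * B⁻¹)) + s.card * (B / w / ((1 - ε / 8) * B - B / w))) :=
        measureReal_le_sum_le_exp hindep hmeas hrate hsurv (by positivity) hlR hR _
    _ = exp (-((1 + ε) * w) + w ^ 2 / ((1 - ε / 8) * w - 1)) := by
        rw [hcard]
        field_simp
    _ ≤ exp (-(1 / 2) * ε * w + 9 / 2) := exp_le_exp.mpr (upper_tail_exponent_le hw hε0 hε1)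

end ComparableRates

lemma rpow_le_mul_rpow_of_div_rpow_le {x y m β c : ℝ} (hβ : 0 ≤ β) (hx : 0 ≤ x) (hxy : x ≤ y)
    (hm : 0 < m) (h : (y / m) ^ β ≤ c) : x ^ β ≤ c * m ^ β :=
  calc x ^ β ≤ y ^ β := rpow_le_rpow hx hxy hβ
    _ = (y / m) ^ β * m ^ β := by
        rw [div_rpow (hx.trans hxy) hm.le, div_mul_cancel₀ _ (rpow_pos_of_pos hm β).ne']
    _ ≤ c * m ^ β := by gcongr

lemma mul_rpow_le_rpow_of_le_div_rpow {x y m β c : ℝ} (hβ : 0 ≤ β) (hy : 0 ≤ y) (hyx : y ≤ x)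
    (hm : 0 < m) (h : c ≤ (y / m) ^ β) : c * m ^ β ≤ x ^ β :=
  calc c * m ^ β ≤ (y / m) ^ β * m ^ β := by gcongr
    _ = y ^ β := by rw [div_rpow hy hm.le, div_mul_cancel₀ _ (rpow_pos_of_pos hm β).ne']
    _ ≤ x ^ β := rpow_le_rpow hy hyx hβ

end

/-- **Chernoff-type bounds.** Let `β ≥ 0`, `ε ∈ (0,1)`, and `ξ_j` independent
exponentials with mean `j^{-β}` (survival function `P[ξ_j > u] = exp(-j^β u)`). For sequences
of positive integers `y_m ~ m`, `z_m ~ m` with `q_m = y_m - z_m ≥ 9`, for all large `m`: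
`P[S(z_m,y_m) < (1-ε)q_m m^{-β}] ≤ e^{-εq_m^{1/2}/2 + 1}` and
`P[S(z_m,y_m) > (1+ε)q_m m^{-β}] ≤ e^{-εq_m^{1/2}/2 + 9/2}`. -/
theorem stmt_18 {Ω : Type*} [MeasurableSpace Ω] (ℙ : Measure Ω) [IsProbabilityMeasure ℙ]
    (β ε : ℝ) (hβ : 0 ≤ β) (hε0 : 0 < ε) (hε1 : ε < 1)
    (ξ : ℕ → Ω → ℝ)
    (hmeas : ∀ j, Measurable (ξ j))
    (hindep : ProbabilityTheory.iIndepFun ξ ℙ)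
    (hexp : ∀ j : ℕ, 1 ≤ j → ∀ u : ℝ, 0 ≤ u →
      ℙ {ω | u < ξ j ω} = ENNReal.ofReal (Real.exp (-(j : ℝ) ^ β * u)))
    (y z : ℕ → ℕ) (hzpos : ∀ m, 0 < z m)
    (hy : Tendsto (fun m : ℕ => (y m : ℝ) / (m : ℝ)) atTop (nhds 1))
    (hz : Tendsto (fun m : ℕ => (z m : ℝ) / (m : ℝ)) atTop (nhds 1))
    (hq : ∀ m : ℕ, 9 ≤ y m - z m) :
    ∃ M : ℕ, ∀ m : ℕ, M ≤ m →
      (ℙ {ω | expSum ξ (z m) (y m) ω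
            < (1 - ε) * ((y m - z m : ℕ) : ℝ) * (m : ℝ) ^ (-β)}).toReal
          ≤ Real.exp (-(1 / 2) * ε * Real.sqrt ((y m - z m : ℕ) : ℝ) + 1) ∧
      (ℙ {ω | (1 + ε) * ((y m - z m : ℕ) : ℝ) * (m : ℝ) ^ (-β)
            < expSum ξ (z m) (y m) ω}).toReal
          ≤ Real.exp (-(1 / 2) * ε * Real.sqrt ((y m - z m : ℕ) : ℝ) + 9 / 2) := by
  have hrpow : ∀ {x : ℕ → ℕ}, Tendsto (fun m : ℕ => (x m : ℝ) / m) atTop (nhds 1) →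
      Tendsto (fun m : ℕ => ((x m : ℝ) / m) ^ β) atTop (nhds 1) := fun h => by
    simpa using h.rpow_const (Or.inr hβ)
  obtain ⟨M, hM⟩ := eventually_atTop.mp
    (((hrpow hy).eventually_le_const (by linarith : (1 : ℝ) < 1 + ε / 8)).and
      (((hrpow hz).eventually_const_le (by linarith : 1 - ε / 8 < (1 : ℝ))).and
        (eventually_gt_atTop 0)))
  refine ⟨M, fun m hm => ?_⟩
  obtain ⟨hyβ, hzβ, hm0⟩ := hM m hm
  have hm0' : (0 : ℝ) < m := Nat.cast_pos.mpr hm0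
  have hpos : ∀ j ∈ Finset.Ico (z m) (y m), 1 ≤ j := fun j hj =>
    (hzpos m).trans_le (Finset.mem_Ico.mp hj).1
  have hrate : ∀ j ∈ Finset.Ico (z m) (y m), (0 : ℝ) < (j : ℝ) ^ β := fun j hj =>
    Real.rpow_pos_of_pos (Nat.cast_pos.mpr (hpos j hj)) β
  have hsurv := fun j hj => hexp j (hpos j hj)
  have hupper : ∀ j ∈ Finset.Ico (z m) (y m), (j : ℝ) ^ β ≤ (1 + ε / 8) * (m : ℝ) ^ β :=
    fun j hj => rpow_le_mul_rpow_of_div_rpow_le hβ (Nat.cast_nonneg j)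
      (Nat.cast_le.mpr (Finset.mem_Ico.mp hj).2.le) hm0' hyβ
  have hlower : ∀ j ∈ Finset.Ico (z m) (y m), (1 - ε / 8) * (m : ℝ) ^ β ≤ (j : ℝ) ^ β :=
    fun j hj => mul_rpow_le_rpow_of_le_div_rpow hβ (Nat.cast_nonneg _)
      (Nat.cast_le.mpr (Finset.mem_Ico.mp hj).1) hm0' hzβ
  rw [← Nat.card_Ico, Real.rpow_neg hm0'.le]
  exact ⟨measureReal_sum_lt_le_exp_sqrt_card hindep hmeas hrate hsurv (by positivity) hε0.le hupper,
    measureReal_lt_sum_le_exp_sqrt_card hindep hmeas hrate hsurv (by positivity) hε0.le hε1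
      (by rw [Nat.card_Ico]; exact hq m) hlower⟩
end
end
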